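/- Let Q ⊂ ℝ^d be a bounded convex set with nonempty interior and let φ : ℝ^d → ℝ be bounded, vanish outside Q, and be α-Hölder on Q for some α ∈ (0,1] (i.e. |φ(x) − φ(y)| ≤ L|x − y|^α for x, y ∈ Q). Then φ belongs to the Nikol'ski class H_s with s = min(α, 1/2): there is a constant C such that for all u ∈ ℝ^d, ∫_{ℝ^d} (φ(x + u) − φ(x))^2 dx ≤ C·|u|^{2·min(α,1/2)}. -/

import Mathlib

/-!
On `Q ∩ (Q - u)` the Hölder bound gives `(φ (x + u) - φ x)² ≤ L² ‖u‖^{2α}`; everywhere else the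
integrand is at most `(2B)²` and it is supported on `Q ∆ (Q - u)`, which lies in two translates of
the shell `(Q + B̄(0, ‖u‖)) \ Q`. If `B̄(x₀, ε) ⊆ Q`, convexity puts `Q + B̄(0, r)` inside the image
of `Q` under the homothety of ratio `1 + r / ε` centred at `x₀`, so for `r ≤ 1` the shell has
measure at most `((1 + r / ε)^d - 1) |Q| = O(r)`. Thus the integral is
`O(min(‖u‖^{2α}, 1) + min(‖u‖, 1))`, which is `O(‖u‖^{2 min(α, 1/2)})`.
-/

open MeasureTheory Metric Set Module
open scoped ENNReal symmDiff Pointwise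

theorem one_add_mul_pow_le_of_le_one {t r : ℝ} (ht : 0 ≤ t) (hr₀ : 0 ≤ r) (hr₁ : r ≤ 1) (n : ℕ) :
    (1 + t * r) ^ n ≤ 1 + ((1 + t) ^ n - 1) * r := by
  have h := (convexOn_pow n).2 (mem_Ici.2 zero_le_one) (mem_Ici.2 (by linarith : (0 : ℝ) ≤ 1 + t))
    (sub_nonneg.2 hr₁) hr₀ (by ring)
  simp only [smul_eq_mul, one_pow, mul_one] at h
  rw [show 1 + t * r = 1 - r + r * (1 + t) by ring]
  linarith

theorem min_mul_rpow_le {a b p q r : ℝ} (ha : 0 ≤ a) (hb : 0 ≤ b) (hr : 0 ≤ r) (hq : 0 < q)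
    (hqp : q ≤ p) : min (a * r ^ p) b ≤ (a + b) * r ^ q := by
  rcases le_or_gt r 1 with hr₁ | hr₁
  · calc min (a * r ^ p) b ≤ a * r ^ p := min_le_left _ _
      _ ≤ a * r ^ q :=
        mul_le_mul_of_nonneg_left (Real.rpow_le_rpow_of_exponent_ge' hr hr₁ hq.le hqp) ha
      _ ≤ (a + b) * r ^ q := by gcongr; linarith
  · calc min (a * r ^ p) b ≤ b := min_le_right _ _
      _ ≤ (a + b) * r ^ q := by nlinarith [Real.one_le_rpow hr₁.le hq.le]

section Translation

variable {E : Type*} [SeminormedAddCommGroup E] [MeasurableSpace E] [MeasurableAdd E]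
  (μ : Measure E) [μ.IsAddRightInvariant]

theorem measure_symmDiff_preimage_add_le (Q : Set E) (u : E) :
    μ (Q ∆ ((· + u) ⁻¹' Q)) ≤ 2 * μ ((Q + closedBall 0 ‖u‖) \ Q) := by
  have hsub : Q ∆ ((· + u) ⁻¹' Q) ⊆
      (· + u) ⁻¹' ((Q + closedBall 0 ‖u‖) \ Q) ∪ (Q + closedBall 0 ‖u‖) \ Q := by
    rintro x (⟨hxQ, hxP⟩ | ⟨hxP, hxQ⟩)
    · exact Or.inl ⟨⟨x, hxQ, u, by simp, rfl⟩, hxP⟩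
    · exact Or.inr ⟨⟨x + u, hxP, -u, by simp, add_neg_cancel_right x u⟩, hxQ⟩
  calc μ (Q ∆ ((· + u) ⁻¹' Q))
      ≤ μ ((· + u) ⁻¹' ((Q + closedBall 0 ‖u‖) \ Q) ∪ (Q + closedBall 0 ‖u‖) \ Q) :=
        measure_mono hsub
    _ ≤ 2 * μ ((Q + closedBall 0 ‖u‖) \ Q) := by
        refine (measure_union_le _ _).trans ?_
        rw [measure_preimage_add_right, two_mul]

theorem measureReal_symmDiff_preimage_add_le {Q : Set E} (hQ : μ Q ≠ ∞) (u : E) :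
    μ.real (Q ∆ ((· + u) ⁻¹' Q)) ≤ 2 * μ.real Q := by
  have hP : μ ((· + u) ⁻¹' Q) = μ Q := measure_preimage_add_right μ u Q
  calc μ.real (Q ∆ ((· + u) ⁻¹' Q)) ≤ μ.real (Q ∪ (· + u) ⁻¹' Q) :=
        measureReal_mono symmDiff_subset_union (measure_union_ne_top hQ (hP ▸ hQ))
    _ ≤ 2 * μ.real Q := by
        refine (measureReal_union_le _ _).trans ?_
        rw [Measure.real, Measure.real, hP, two_mul]

end Translation

section Convex

variable {E : Type*} [NormedAddCommGroup E] [NormedSpace ℝ E] {Q : Set E}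

theorem Convex.add_closedBall_subset_image_homothety (hQ : Convex ℝ Q) {x₀ : E} {ε r : ℝ}
    (hε : 0 < ε) (hr : 0 < r) (hball : closedBall x₀ ε ⊆ Q) :
    Q + closedBall 0 r ⊆ AffineMap.homothety x₀ (1 + r / ε) '' Q := by
  rintro _ ⟨q, hq, b, hb, rfl⟩
  rw [mem_closedBall_zero_iff] at hb
  have hb' : x₀ + (ε / r) • b ∈ Q := hball <| by
    rw [mem_closedBall, dist_self_add_left, norm_smul, Real.norm_of_nonneg (by positivity)]
    calc ε / r * ‖b‖ ≤ ε / r * r := by gcongr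
      _ = ε := div_mul_cancel₀ _ hr.ne'
  refine ⟨(1 + r / ε)⁻¹ • q + (r / ε / (1 + r / ε)) • (x₀ + (ε / r) • b),
    hQ hq hb' (by positivity) (by positivity) (by field_simp), ?_⟩
  rw [AffineMap.homothety_apply, vsub_eq_sub, vadd_eq_add]
  match_scalars
  all_goals field_simp
  ring

variable [MeasurableSpace E] [BorelSpace E] [FiniteDimensional ℝ E] (μ : Measure E)
  [μ.IsAddHaarMeasure]

theorem Convex.addHaar_add_closedBall_le (hQ : Convex ℝ Q) {x₀ : E} {ε r : ℝ} (hε : 0 < ε)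
    (hr : 0 < r) (hball : closedBall x₀ ε ⊆ Q) :
    μ (Q + closedBall 0 r) ≤ ENNReal.ofReal ((1 + r / ε) ^ finrank ℝ E) * μ Q := by
  calc μ (Q + closedBall 0 r) ≤ μ (AffineMap.homothety x₀ (1 + r / ε) '' Q) :=
        measure_mono (hQ.add_closedBall_subset_image_homothety hε hr hball)
    _ = ENNReal.ofReal ((1 + r / ε) ^ finrank ℝ E) * μ Q := by
        rw [Measure.addHaar_image_homothety, abs_of_nonneg (by positivity)]

theorem Convex.addHaar_add_closedBall_sdiff_le (hQ : Convex ℝ Q) (hQfin : μ Q ≠ ∞) {x₀ : E}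
    {ε r : ℝ} (hε : 0 < ε) (hball : closedBall x₀ ε ⊆ Q) (hr₀ : 0 < r) (hr₁ : r ≤ 1) :
    μ ((Q + closedBall 0 r) \ Q) ≤
      ENNReal.ofReal (((1 + ε⁻¹) ^ finrank ℝ E - 1) * r) * μ Q := by
  have hK : 0 ≤ ((1 + ε⁻¹) ^ finrank ℝ E - 1) * r :=
    mul_nonneg (sub_nonneg.2 (one_le_pow₀ (by linarith [inv_pos.2 hε]))) hr₀.le
  rw [measure_sdiff_le_iff_le_add (hQ.nullMeasurableSet μ)
    (subset_add_left Q (mem_closedBall_self hr₀.le)) hQfin]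
  calc μ (Q + closedBall 0 r) ≤ ENNReal.ofReal ((1 + r / ε) ^ finrank ℝ E) * μ Q :=
        hQ.addHaar_add_closedBall_le μ hε hr₀ hball
    _ ≤ ENNReal.ofReal (1 + ((1 + ε⁻¹) ^ finrank ℝ E - 1) * r) * μ Q := by
        gcongr
        rw [div_eq_inv_mul]
        exact one_add_mul_pow_le_of_le_one (inv_pos.2 hε).le hr₀.le hr₁ _
    _ = μ Q + ENNReal.ofReal (((1 + ε⁻¹) ^ finrank ℝ E - 1) * r) * μ Q := by
        rw [ENNReal.ofReal_add zero_le_one hK, ENNReal.ofReal_one, add_mul, one_mul]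

theorem Convex.exists_measureReal_symmDiff_preimage_add_le (hQ : Convex ℝ Q)
    (hbdd : Bornology.IsBounded Q) (hint : (interior Q).Nonempty) :
    ∃ C ≥ 0, ∀ u : E, μ.real (Q ∆ ((· + u) ⁻¹' Q)) ≤ C * ‖u‖ := by
  obtain ⟨x₀, hx₀⟩ := hint
  obtain ⟨ε, hε, hball⟩ := nhds_basis_closedBall.mem_iff.1 (mem_interior_iff_mem_nhds.1 hx₀)
  have hQfin : μ Q ≠ ∞ := hbdd.measure_lt_top.ne
  set K := (1 + ε⁻¹) ^ finrank ℝ E - 1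
  have hK : 0 ≤ K := sub_nonneg.2 (one_le_pow₀ (by linarith [inv_pos.2 hε]))
  refine ⟨2 * max K 1 * μ.real Q, by positivity, fun u => ?_⟩
  rcases eq_or_ne u 0 with rfl | hu
  · simp
  rcases le_or_gt ‖u‖ 1 with hu₁ | hu₁
  · have h := (measure_symmDiff_preimage_add_le μ Q u).trans <|
      mul_le_mul_right (hQ.addHaar_add_closedBall_sdiff_le μ hQfin hε hball
        (norm_pos_iff.2 hu) hu₁) 2
    calc μ.real (Q ∆ ((· + u) ⁻¹' Q)) ≤ 2 * (K * ‖u‖) * μ.real Q := by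
          have h' := ENNReal.toReal_mono (by finiteness) h
          rwa [ENNReal.toReal_mul, ENNReal.toReal_mul, ENNReal.toReal_ofReal (by positivity),
            ENNReal.toReal_ofNat, ← mul_assoc] at h'
      _ = 2 * K * μ.real Q * ‖u‖ := by ring
      _ ≤ 2 * max K 1 * μ.real Q * ‖u‖ := by
          gcongr
          exact le_max_left _ _
  · calc μ.real (Q ∆ ((· + u) ⁻¹' Q)) ≤ 2 * 1 * μ.real Q * 1 := by
          simpa using measureReal_symmDiff_preimage_add_le μ hQfin u
      _ ≤ 2 * max K 1 * μ.real Q * ‖u‖ := by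
          gcongr
          exact le_max_right _ _

end Convex

theorem integral_sq_sub_comp_add_le {E : Type*} [AddGroup E] [MeasurableSpace E]
    [MeasurableAdd E] (μ : Measure E) [μ.IsAddRightInvariant] {Q : Set E}
    (hQ : NullMeasurableSet Q μ) (hQfin : μ Q ≠ ∞) {φ : E → ℝ} {B : ℝ} (hφb : ∀ x, |φ x| ≤ B)
    (hsupp : ∀ x ∉ Q, φ x = 0) (u : E) {D : ℝ} (hD₀ : 0 ≤ D)
    (hD : ∀ x ∈ Q, x + u ∈ Q → (φ (x + u) - φ x) ^ 2 ≤ D) :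
    ∫ x, (φ (x + u) - φ x) ^ 2 ∂μ ≤
      min D ((2 * B) ^ 2) * μ.real Q + (2 * B) ^ 2 * μ.real (Q ∆ ((· + u) ⁻¹' Q)) := by
  set P := (· + u) ⁻¹' Q
  have hP : NullMeasurableSet P μ :=
    hQ.preimage (measurePreserving_add_right μ u).quasiMeasurePreserving
  have hPfin : μ P ≠ ∞ := by rwa [measure_preimage_add_right]
  have hT : NullMeasurableSet (Q ∆ P) μ := hQ.symmDiff hP
  have hTfin : μ (Q ∆ P) ≠ ∞ := measure_symmDiff_ne_top hQfin hPfin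
  set g := Q.indicator (fun _ => min D ((2 * B) ^ 2)) + (Q ∆ P).indicator (fun _ => (2 * B) ^ 2)
  have hgQ := (integrableOn_const (C := min D ((2 * B) ^ 2)) hQfin).integrable_indicator₀ hQ
  have hgT := (integrableOn_const (C := (2 * B) ^ 2) hTfin).integrable_indicator₀ hT
  have h2B : ∀ x, (φ (x + u) - φ x) ^ 2 ≤ (2 * B) ^ 2 := fun x => by
    obtain ⟨h₁, h₂⟩ := abs_le.1 (hφb x)
    obtain ⟨h₃, h₄⟩ := abs_le.1 (hφb (x + u))
    exact sq_le_sq' (by linarith) (by linarith)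
  have hfg : ∀ x, (φ (x + u) - φ x) ^ 2 ≤ g x := fun x => by
    have hmin : 0 ≤ min D ((2 * B) ^ 2) := le_min hD₀ (sq_nonneg _)
    by_cases hxQ : x ∈ Q <;> by_cases hxP : x + u ∈ Q <;>
      simp only [g, P, Pi.add_apply, indicator, mem_symmDiff, mem_preimage, hxQ, hxP,
        if_true, if_false, and_true, and_false, not_true, not_false_eq_true, or_false, false_or,
        add_zero, zero_add]
    · exact le_min (hD x hxQ hxP) (h2B x)
    · linarith [h2B x]
    · exact h2B x
    · simp [hsupp x hxQ, hsupp _ hxP]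
  -- `integral_mono_of_nonneg` needs no integrability of the integrand, so no measurability of `φ`.
  calc ∫ x, (φ (x + u) - φ x) ^ 2 ∂μ ≤ ∫ x, g x ∂μ :=
        integral_mono_of_nonneg (ae_of_all _ fun x => sq_nonneg _) (hgQ.add hgT)
          (ae_of_all _ hfg)
    _ = min D ((2 * B) ^ 2) * μ.real Q + (2 * B) ^ 2 * μ.real (Q ∆ P) := by
        simp only [g, Pi.add_apply]
        rw [integral_add hgQ hgT, integral_indicator₀ hQ, integral_indicator₀ hT,
          setIntegral_const, setIntegral_const, smul_eq_mul, smul_eq_mul, mul_comm,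
          mul_comm (μ.real _)]

theorem stmt_8_general (d : ℕ) (Q : Set (Fin d → ℝ))
    (hQconv : Convex ℝ Q) (hQbdd : Bornology.IsBounded Q)
    (hQint : (interior Q).Nonempty)
    (φ : (Fin d → ℝ) → ℝ) (B : ℝ) (hφb : ∀ x, |φ x| ≤ B)
    (hsupp : ∀ x ∉ Q, φ x = 0)
    (α L : ℝ) (hα0 : 0 < α)
    (hHol : ∀ x ∈ Q, ∀ y ∈ Q, |φ x - φ y| ≤ L * ‖x - y‖ ^ α) :
    ∃ C : ℝ, ∀ u : Fin d → ℝ,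
      ∫ x, (φ (x + u) - φ x) ^ 2 ≤ C * ‖u‖ ^ (2 * min α (1 / 2)) := by
  obtain ⟨C, hC₀, hC⟩ := hQconv.exists_measureReal_symmDiff_preimage_add_le volume hQbdd hQint
  have hQfin : volume Q ≠ ∞ := hQbdd.measure_lt_top.ne
  have hs : 0 < 2 * min α (1 / 2) := by positivity
  refine ⟨(L ^ 2 + (2 * B) ^ 2) * volume.real Q + (2 * B) ^ 2 * (C + 2 * volume.real Q),
    fun u => ?_⟩
  have hHol_u : ∀ x ∈ Q, x + u ∈ Q → (φ (x + u) - φ x) ^ 2 ≤ L ^ 2 * ‖u‖ ^ (α * 2) := by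
    intro x hx hxu
    have h := hHol _ hxu _ hx
    rw [add_sub_cancel_left] at h
    rw [← sq_abs, Real.rpow_mul (norm_nonneg u), Real.rpow_two, ← mul_pow]
    exact pow_le_pow_left₀ (abs_nonneg _) h 2
  have hsymm : volume.real (Q ∆ ((· + u) ⁻¹' Q)) ≤ min (C * ‖u‖ ^ (1 : ℝ)) (2 * volume.real Q) :=
    le_min (by simpa using hC u) (measureReal_symmDiff_preimage_add_le volume hQfin u)
  calc ∫ x, (φ (x + u) - φ x) ^ 2
      ≤ min (L ^ 2 * ‖u‖ ^ (α * 2)) ((2 * B) ^ 2) * volume.real Q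
          + (2 * B) ^ 2 * volume.real (Q ∆ ((· + u) ⁻¹' Q)) :=
        integral_sq_sub_comp_add_le volume (hQconv.nullMeasurableSet volume) hQfin hφb hsupp u
          (by positivity) hHol_u
    _ ≤ (L ^ 2 + (2 * B) ^ 2) * ‖u‖ ^ (2 * min α (1 / 2)) * volume.real Q
          + (2 * B) ^ 2 * ((C + 2 * volume.real Q) * ‖u‖ ^ (2 * min α (1 / 2))) := by
        gcongr
        · exact min_mul_rpow_le (sq_nonneg L) (sq_nonneg _) (norm_nonneg u) hs
            (by linarith [min_le_left α (1 / 2)])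
        · exact hsymm.trans (min_mul_rpow_le hC₀ (by positivity) (norm_nonneg u) hs
            (by linarith [min_le_right α (1 / 2)]))
    _ = _ := by ring

/-- A bounded function vanishing outside a bounded convex set `Q` (with
nonempty interior) that is `α`-Hölder on `Q` belongs to the Nikol'ski class
`H_{min(α,1/2)}`. -/
theorem stmt_8 (d : ℕ) (Q : Set (Fin d → ℝ))
    (hQconv : Convex ℝ Q) (hQbdd : Bornology.IsBounded Q)
    (hQint : (interior Q).Nonempty)
    (φ : (Fin d → ℝ) → ℝ) (B : ℝ) (hφb : ∀ x, |φ x| ≤ B)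
    (hsupp : ∀ x ∉ Q, φ x = 0)
    (α L : ℝ) (hα0 : 0 < α) (hα1 : α ≤ 1) (hL : 0 ≤ L)
    (hHol : ∀ x ∈ Q, ∀ y ∈ Q, |φ x - φ y| ≤ L * ‖x - y‖ ^ α) :
    ∃ C : ℝ, ∀ u : Fin d → ℝ,
      ∫ x, (φ (x + u) - φ x) ^ 2 ≤ C * ‖u‖ ^ (2 * min α (1 / 2)) :=
  stmt_8_general d Q hQconv hQbdd hQint φ B hφb hsupp α L hα0 hHol
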